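/- Let N ≥ 1, γ₁, …, γ_N > 0, η > 0, σ > 0, and q ∈ ℝᴺ. Define f : ℝᴺ → ℝ by f(z) = Σᵢ (η/2)σ²γᵢ(zᵢ + qᵢ)² + (η²σ²/2)(Σᵢ zᵢ)². Then f has a unique global minimizer z* given by zᵢ* = −qᵢ + (η/γᵢ)·(Σⱼ qⱼ)/(1 + ηΓ), where Γ := Σⱼ 1/γⱼ. Equivalently, z* is the unique solution of the linear system γᵢ(zᵢ + qᵢ) + η Σⱼ zⱼ = 0 for all i. -/

import Mathlib

/-!
The first-order conditions of `f` are, up to the factor `η σ² / 2`, the linear system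
`γᵢ (zᵢ + qᵢ) + η Σⱼ zⱼ = 0`. Dividing by `γᵢ` and summing over `i` determines `Σⱼ zⱼ`, hence
each `zᵢ`, so the system has exactly one solution `z*`. Since `f` is quadratic, expanding it
around a critical point `z*` leaves `f z* + Σᵢ (η/2) σ² γᵢ (zᵢ - z*ᵢ)² + (η²σ²/2) (Σᵢ (zᵢ - z*ᵢ))²`,
which is strictly larger than `f z*` unless `z = z*`.
-/

open Finset

variable {ι : Type*} [Fintype ι]

section LinearSystem

variable {γ q z : ι → ℝ} {η : ℝ}

theorem sum_eq_of_linear_system (hγ : ∀ i, γ i ≠ 0) (hd : 1 + η * ∑ j, 1 / γ j ≠ 0)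
    (h : ∀ i, γ i * (z i + q i) + η * ∑ j, z j = 0) :
    ∑ j, z j = -(∑ j, q j) / (1 + η * ∑ j, 1 / γ j) := by
  have hz : ∀ i, z i = -q i - η * (∑ j, z j) * (1 / γ i) := fun i => by
    field_simp [hγ i]
    linarith [h i]
  have hsum : ∑ j, z j = -(∑ j, q j) - η * (∑ j, z j) * ∑ j, 1 / γ j :=
    calc ∑ j, z j = ∑ j, (-q j - η * (∑ k, z k) * (1 / γ j)) := sum_congr rfl fun j _ => hz j
      _ = _ := by rw [sum_sub_distrib, sum_neg_distrib, ← mul_sum]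
  rw [eq_div_iff hd]
  linarith

theorem linear_system_iff (hγ : ∀ i, γ i ≠ 0) (hd : 1 + η * ∑ j, 1 / γ j ≠ 0) :
    (∀ i, γ i * (z i + q i) + η * ∑ j, z j = 0) ↔
      ∀ i, z i = -q i + (η / γ i) * (∑ j, q j) / (1 + η * ∑ j, 1 / γ j) := by
  constructor
  · intro h i
    have hzi := h i
    rw [sum_eq_of_linear_system hγ hd h] at hzi
    field_simp [hγ i] at hzi ⊢
    linarith
  · intro h
    have hsum : ∑ j, z j = -(∑ j, q j) / (1 + η * ∑ j, 1 / γ j) :=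
      calc ∑ j, z j
          = ∑ j, (-q j + η * (∑ k, q k) / (1 + η * ∑ k, 1 / γ k) * (1 / γ j)) :=
            sum_congr rfl fun j _ => by rw [h j]; ring
        _ = -(∑ j, q j) + η * (∑ k, q k) / (1 + η * ∑ k, 1 / γ k) * ∑ j, 1 / γ j := by
            rw [sum_add_distrib, sum_neg_distrib, ← mul_sum]
        _ = _ := by field_simp; ring
    intro i
    rw [h i, hsum]
    field_simp [hγ i]
    ring

end LinearSystem

section Quadratic

def quadCost (a q : ι → ℝ) (c : ℝ) (z : ι → ℝ) : ℝ :=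
  ∑ i, a i * (z i + q i) ^ 2 + c * (∑ i, z i) ^ 2

variable {a q w : ι → ℝ} {c : ℝ}

theorem quadCost_eq_add_of_foc (hw : ∀ i, a i * (w i + q i) + c * ∑ j, w j = 0) (z : ι → ℝ) :
    quadCost a q c z =
      quadCost a q c w + ∑ i, a i * (z i - w i) ^ 2 + c * (∑ i, (z i - w i)) ^ 2 := by
  have hcross : ∑ i, a i * (w i + q i) * (z i - w i) + c * (∑ j, w j) * ∑ i, (z i - w i) = 0 := by
    rw [mul_sum, ← sum_add_distrib]
    exact sum_eq_zero fun i _ => by linear_combination (z i - w i) * hw i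
  have hsq : ∑ i, a i * (z i + q i) ^ 2 = ∑ i, a i * (w i + q i) ^ 2
      + 2 * ∑ i, a i * (w i + q i) * (z i - w i) + ∑ i, a i * (z i - w i) ^ 2 := by
    rw [mul_sum, ← sum_add_distrib, ← sum_add_distrib]
    exact sum_congr rfl fun i _ => by ring
  have hs : ∑ i, z i = ∑ i, w i + ∑ i, (z i - w i) := by
    rw [sum_sub_distrib]
    ring
  unfold quadCost
  rw [hsq, hs]
  linear_combination 2 * hcross

theorem quadCost_le_of_foc (ha : ∀ i, 0 ≤ a i) (hc : 0 ≤ c)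
    (hw : ∀ i, a i * (w i + q i) + c * ∑ j, w j = 0) (z : ι → ℝ) :
    quadCost a q c w ≤ quadCost a q c z := by
  rw [quadCost_eq_add_of_foc hw z]
  have hS : 0 ≤ ∑ i, a i * (z i - w i) ^ 2 := sum_nonneg fun i _ => by have := ha i; positivity
  have hT : 0 ≤ c * (∑ i, (z i - w i)) ^ 2 := by positivity
  linarith

theorem eq_of_quadCost_le (ha : ∀ i, 0 < a i) (hc : 0 ≤ c)
    (hw : ∀ i, a i * (w i + q i) + c * ∑ j, w j = 0) {z : ι → ℝ}
    (h : quadCost a q c z ≤ quadCost a q c w) : z = w := by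
  rw [quadCost_eq_add_of_foc hw z] at h
  have hnonneg : ∀ i ∈ univ, 0 ≤ a i * (z i - w i) ^ 2 := fun i _ => by
    have := ha i
    positivity
  have hT : 0 ≤ c * (∑ i, (z i - w i)) ^ 2 := by positivity
  have hS : ∑ i, a i * (z i - w i) ^ 2 = 0 := le_antisymm (by linarith) (sum_nonneg hnonneg)
  funext i
  have hi := (sum_eq_zero_iff_of_nonneg hnonneg).1 hS i (mem_univ i)
  simpa [(ha i).ne', sub_eq_zero] using hi

end Quadratic

theorem risk_sharing_minimizer_general (N : ℕ) (γ : Fin N → ℝ)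
    (hγ : ∀ i, 0 < γ i) (η σ : ℝ) (hη : 0 < η) (hσ : 0 < σ) (q : Fin N → ℝ)
    (f : (Fin N → ℝ) → ℝ)
    (hf : ∀ z, f z = ∑ i, (η / 2) * σ ^ 2 * γ i * (z i + q i) ^ 2
        + (η ^ 2 * σ ^ 2 / 2) * (∑ i, z i) ^ 2)
    (Γ : ℝ) (hΓ : Γ = ∑ j, 1 / γ j)
    (zstar : Fin N → ℝ)
    (hz : ∀ i, zstar i = -q i + (η / γ i) * (∑ j, q j) / (1 + η * Γ)) :
    (∀ z, f zstar ≤ f z) ∧ (∀ z, (∀ y, f z ≤ f y) → z = zstar) ∧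
      (∀ i, γ i * (zstar i + q i) + η * ∑ j, zstar j = 0) ∧
      (∀ z : Fin N → ℝ, (∀ i, γ i * (z i + q i) + η * ∑ j, z j = 0) → z = zstar) := by
  subst hΓ
  have hd : 0 < 1 + η * ∑ j, 1 / γ j := by
    have := sum_nonneg fun j (_ : j ∈ univ) => (one_div_pos.2 (hγ j)).le
    positivity
  have hsys : ∀ z, (∀ i, γ i * (z i + q i) + η * ∑ j, z j = 0) ↔ z = zstar := fun z =>
    (linear_system_iff (fun i => (hγ i).ne') hd.ne').trans (by simp only [funext_iff, hz])
  have hzstar := (hsys zstar).2 rfl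
  have hfoc : ∀ i, η / 2 * σ ^ 2 * γ i * (zstar i + q i) + η ^ 2 * σ ^ 2 / 2 * ∑ j, zstar j = 0 :=
    fun i => by linear_combination (η * σ ^ 2 / 2) * hzstar i
  have ha : ∀ i, 0 < η / 2 * σ ^ 2 * γ i := fun i => by have := hγ i; positivity
  have hc : 0 ≤ η ^ 2 * σ ^ 2 / 2 := by positivity
  obtain rfl : f = quadCost (fun i => η / 2 * σ ^ 2 * γ i) q (η ^ 2 * σ ^ 2 / 2) := funext hf
  exact ⟨quadCost_le_of_foc (fun i => (ha i).le) hc hfoc,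
    fun z hmin => eq_of_quadCost_le ha hc hfoc (hmin zstar), hzstar, fun z => (hsys z).1⟩

theorem risk_sharing_minimizer (N : ℕ) (hN : 1 ≤ N) (γ : Fin N → ℝ)
    (hγ : ∀ i, 0 < γ i) (η σ : ℝ) (hη : 0 < η) (hσ : 0 < σ) (q : Fin N → ℝ)
    (f : (Fin N → ℝ) → ℝ)
    (hf : ∀ z, f z = ∑ i, (η / 2) * σ ^ 2 * γ i * (z i + q i) ^ 2
        + (η ^ 2 * σ ^ 2 / 2) * (∑ i, z i) ^ 2)
    (Γ : ℝ) (hΓ : Γ = ∑ j, 1 / γ j)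
    (zstar : Fin N → ℝ)
    (hz : ∀ i, zstar i = -q i + (η / γ i) * (∑ j, q j) / (1 + η * Γ)) :
    (∀ z, f zstar ≤ f z) ∧ (∀ z, (∀ y, f z ≤ f y) → z = zstar) ∧
      (∀ i, γ i * (zstar i + q i) + η * ∑ j, zstar j = 0) ∧
      (∀ z : Fin N → ℝ, (∀ i, γ i * (z i + q i) + η * ∑ j, z j = 0) → z = zstar) :=
  risk_sharing_minimizer_general N γ hγ η σ hη hσ q f hf Γ hΓ zstar hz
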